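/- Let T > 0, let V : [0, T] → ℝ^{d×r} be differentiable with V(t)ᵀ V(t) = I_r for all t, set Π(t) = V(t) V(t)ᵀ, let f : ℝ^d × [0, T] → ℝ^d, let u : [0, T] → ℝ^d be differentiable with u′(t) = f(u(t), t), let α : [0, T] → ℝ^r be differentiable, and set u_r(t) = V(t) α(t) with Π(t) u_r′(t) = Π(t) f(u_r(t), t) for all t. Then the error e(t) = u(t) − u_r(t) satisfies, for all t ∈ [0, T], e′(t) = (f(u(t), t) − f(u_r(t), t)) + (I_d − Π(t)) f(u_r(t), t) − (I_d − Π(t)) V′(t) V(t)ᵀ u_r(t). -/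
import Mathlib

attribute [local instance] Matrix.normedAddCommGroup Matrix.normedSpace

private lemma toEL_mul {m n p : ℕ} (A : Matrix (Fin m) (Fin n) ℝ)
    (B : Matrix (Fin n) (Fin p) ℝ) (x : EuclideanSpace ℝ (Fin p)) :
    Matrix.toEuclideanLin (A * B) x
      = Matrix.toEuclideanLin A (Matrix.toEuclideanLin B x) := by
  simp [Matrix.toEuclideanLin_apply, Matrix.mulVec_mulVec]

private lemma toEL_one {m : ℕ} (x : EuclideanSpace ℝ (Fin m)) :
    Matrix.toEuclideanLin (1 : Matrix (Fin m) (Fin m) ℝ) x = x := by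
  simp [Matrix.toEuclideanLin_apply]

/-- The error `e = u − u_r` of the Galerkin reduced approximation satisfies
`e′(t) = (f(u(t),t) − f(u_r(t),t)) + (I − Π(t)) f(u_r(t),t) − (I − Π(t)) V′(t) V(t)ᵀ u_r(t)`. -/
theorem stmt_9 (d r : ℕ) (T : ℝ) (hT : 0 < T)
    (V V' : ℝ → Matrix (Fin d) (Fin r) ℝ)
    (hV : ∀ t ∈ Set.Icc (0:ℝ) T, HasDerivWithinAt V (V' t) (Set.Icc 0 T) t)
    (horth : ∀ t ∈ Set.Icc (0:ℝ) T, (V t).transpose * V t = 1)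
    (f : EuclideanSpace ℝ (Fin d) → ℝ → EuclideanSpace ℝ (Fin d))
    (u : ℝ → EuclideanSpace ℝ (Fin d))
    (hu : ∀ t ∈ Set.Icc (0:ℝ) T, HasDerivWithinAt u (f (u t) t) (Set.Icc 0 T) t)
    (α α' : ℝ → EuclideanSpace ℝ (Fin r))
    (hα : ∀ t ∈ Set.Icc (0:ℝ) T, HasDerivWithinAt α (α' t) (Set.Icc 0 T) t)
    (ur ur' : ℝ → EuclideanSpace ℝ (Fin d))
    (hur : ∀ t, ur t = Matrix.toEuclideanLin (V t) (α t))
    (hurd : ∀ t ∈ Set.Icc (0:ℝ) T, HasDerivWithinAt ur (ur' t) (Set.Icc 0 T) t)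
    (hGal : ∀ t ∈ Set.Icc (0:ℝ) T,
      Matrix.toEuclideanLin (V t * (V t).transpose) (ur' t) =
        Matrix.toEuclideanLin (V t * (V t).transpose) (f (ur t) t)) :
    ∀ t ∈ Set.Icc (0:ℝ) T,
      HasDerivWithinAt (fun s => u s - ur s)
        ((f (u t) t - f (ur t) t) +
          Matrix.toEuclideanLin (1 - V t * (V t).transpose) (f (ur t) t) -
          Matrix.toEuclideanLin (1 - V t * (V t).transpose)
            (Matrix.toEuclideanLin (V' t * (V t).transpose) (ur t)))
        (Set.Icc 0 T) t := by
  intro t ht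
  -- the continuous-linear-map version of toEuclideanLin
  set Lc : Matrix (Fin d) (Fin r) ℝ →L[ℝ]
      (EuclideanSpace ℝ (Fin r) →L[ℝ] EuclideanSpace ℝ (Fin d)) :=
    LinearMap.toContinuousLinearMap
      ((LinearMap.toContinuousLinearMap :
          (EuclideanSpace ℝ (Fin r) →ₗ[ℝ] EuclideanSpace ℝ (Fin d)) ≃ₗ[ℝ] _).toLinearMap
        ∘ₗ (Matrix.toEuclideanLin :
          Matrix (Fin d) (Fin r) ℝ ≃ₗ[ℝ] _).toLinearMap) with hLc
  have hLcapp : ∀ (M : Matrix (Fin d) (Fin r) ℝ) (x : EuclideanSpace ℝ (Fin r)),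
      Lc M x = Matrix.toEuclideanLin M x := by
    intro M x; simp [hLc]
  -- derivative of ur computed from the product formula
  have hd1 : HasDerivWithinAt (fun s => Lc (V s)) (Lc (V' t)) (Set.Icc 0 T) t :=
    (Lc.hasFDerivAt.comp_hasDerivWithinAt t (hV t ht))
  have hd2 : HasDerivWithinAt ur
      (Lc (V' t) (α t) + Lc (V t) (α' t)) (Set.Icc 0 T) t := by
    have := hd1.clm_apply (hα t ht)
    refine HasDerivWithinAt.congr this (fun s _ => ?_) ?_ <;>
      simp only [hur, hLcapp]
  have hud : UniqueDiffWithinAt ℝ (Set.Icc (0:ℝ) T) t := (uniqueDiffOn_Icc hT) t ht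
  have hur' : ur' t = Matrix.toEuclideanLin (V' t) (α t)
      + Matrix.toEuclideanLin (V t) (α' t) := by
    have h1 := (hurd t ht).derivWithin hud
    have h2 := hd2.derivWithin hud
    rw [← h1, h2, hLcapp, hLcapp]
  -- key identity: the claimed derivative equals f (u t) t - ur' t
  have hG := hGal t ht
  have ho := horth t ht
  have hP : ∀ x : EuclideanSpace ℝ (Fin d),
      Matrix.toEuclideanLin (1 - V t * (V t).transpose) x
        = x - Matrix.toEuclideanLin (V t * (V t).transpose) x := by
    intro x
    rw [map_sub, LinearMap.sub_apply, toEL_one]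
  have e1 : Matrix.toEuclideanLin (V' t * (V t).transpose) (ur t)
      = Matrix.toEuclideanLin (V' t) (α t) := by
    rw [hur t, ← toEL_mul, Matrix.mul_assoc, ho, Matrix.mul_one]
  have e2 : Matrix.toEuclideanLin (V t * (V t).transpose)
        (Matrix.toEuclideanLin (V t) (α' t)) = Matrix.toEuclideanLin (V t) (α' t) := by
    rw [← toEL_mul, Matrix.mul_assoc, ho, Matrix.mul_one]
  have e3 : Matrix.toEuclideanLin (V t * (V t).transpose) (f (ur t) t)
      = Matrix.toEuclideanLin (V t * (V t).transpose)
          (Matrix.toEuclideanLin (V' t) (α t))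
        + Matrix.toEuclideanLin (V t) (α' t) := by
    rw [← hG, hur', map_add, e2]
  have key : (f (u t) t - f (ur t) t) +
      Matrix.toEuclideanLin (1 - V t * (V t).transpose) (f (ur t) t) -
      Matrix.toEuclideanLin (1 - V t * (V t).transpose)
        (Matrix.toEuclideanLin (V' t * (V t).transpose) (ur t))
      = f (u t) t - ur' t := by
    rw [hP, hP, e1, e3, hur']
    abel
  rw [key]
  exact (hu t ht).sub (hurd t ht)
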